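/- Let μ > 0 be non-integer, m = ⌈μ⌉, ν = m - μ, f defined on ℕ_a, a ∈ ℤ⁺. Then Δ^{-μ}(Δ_*^μ f(t)) = Δ^{-m}(Δ^m f(t)) for all t ∈ ℕ_{a+m}, where Δ_*^μ f = Δ^{-ν}(Δ^m f) and Δ^{-α} denotes the α-th fractional sum. -/

import Mathlib

open Finset

/-- Generalized falling factorial `t^(α) = Γ(t+1)/Γ(t-α+1)`. -/
noncomputable def gff (t α : ℝ) : ℝ := Real.Gamma (t + 1) / Real.Gamma (t - α + 1)

/-- Forward difference operator `Δf(t) = f(t+1) - f(t)`. -/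
def fdiff (f : ℝ → ℝ) : ℝ → ℝ := fun t => f (t + 1) - f t

/-- The ν-th fractional sum with base point `a`:
`Δ^{-ν} f(t) = (1/Γ(ν)) ∑_{s=a}^{t-ν} (t-s-1)^(ν-1) f(s)`, the sum running over
`s = a, a+1, ..., t-ν` (for `t ∈ ℕ_{a+ν}`, there are `t-ν-a+1` terms). -/
noncomputable def fsum (ν a : ℝ) (f : ℝ → ℝ) (t : ℝ) : ℝ :=
  (1 / Real.Gamma ν) *
    ∑ j ∈ Finset.range ((⌊t - ν - a⌋).toNat + 1),
      gff (t - (a + j) - 1) (ν - 1) * f (a + j)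

/-- The Caputo-like fractional difference `Δ_*^μ f = Δ^{-(⌈μ⌉-μ)} (Δ^{⌈μ⌉} f)`. -/
noncomputable def caputo (μ a : ℝ) (f : ℝ → ℝ) : ℝ → ℝ :=
  fsum ((⌈μ⌉₊ : ℝ) - μ) a (fdiff^[⌈μ⌉₊] f)

/-!
At the lattice points `a + ν + n`, the fractional sum `Δ^{-ν}` with base point `a` is the
convolution of `k ↦ g (a + k)` with the coefficients `Γ(ν + k) / (Γ(ν) k!)` of `(1 - X)^(-ν)`.
Composing fractional sums therefore multiplies these series, and
`(1 - X)^(-μ) (1 - X)^(-ν) = (1 - X)^(-(μ + ν))` (Chu–Vandermonde) gives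
`Δ^{-μ} Δ^{-ν} = Δ^{-(μ + ν)}`. For `ν = m - μ` this turns `Δ^{-μ} Δ_*^μ f = Δ^{-μ} Δ^{-ν} Δ^m f`
into `Δ^{-m} Δ^m f`.
-/

open PowerSeries

namespace PowerSeries

variable {R : Type*} [CommRing R] [BinomialRing R]

/-- The power series of `(1 - X) ^ (-r)`. -/
noncomputable def negBinomialSeries (r : R) : R⟦X⟧ :=
  rescale (-1 : R) (binomialSeries R (-r))

theorem coeff_negBinomialSeries (r : R) (k : ℕ) :
    coeff k (negBinomialSeries r) = Ring.multichoose r k := by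
  rw [negBinomialSeries, coeff_rescale, binomialSeries_coeff, Ring.choose_neg', smul_eq_mul,
    mul_one, Units.smul_def, ← Int.cast_negOnePow_natCast, zsmul_eq_mul, ← mul_assoc,
    ← Int.cast_mul, ← Units.val_mul, ← Int.negOnePow_add, ← two_mul, Int.negOnePow_two_mul]
  simp

theorem negBinomialSeries_add (r s : R) :
    negBinomialSeries (r + s) = negBinomialSeries r * negBinomialSeries s := by
  rw [negBinomialSeries, neg_add, binomialSeries_add, map_mul]
  rfl

end PowerSeries

theorem Real.Gamma_add_nat_eq_mul_multichoose {x : ℝ} (hx : ∀ n : ℕ, x ≠ -n) (k : ℕ) :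
    Real.Gamma (x + k) = Real.Gamma x * k.factorial * Ring.multichoose x k := by
  rw [mul_assoc, ← nsmul_eq_mul, Ring.factorial_nsmul_multichoose_eq_ascPochhammer,
    Polynomial.ascPochhammer_smeval_eq_eval]
  induction k with
  | zero => simp
  | succ k ih =>
    have hxk : x + k ≠ 0 := fun h => hx k (by linarith)
    rw [Nat.cast_succ, ← add_assoc, Real.Gamma_add_one hxk, ih, ascPochhammer_succ_eval]
    ring

theorem gff_add_nat_sub_one (x : ℝ) (k : ℕ) :
    gff (x + k - 1) (x - 1) = Real.Gamma (x + k) / k.factorial := by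
  rw [gff, sub_add_cancel, show x + k - 1 - (x - 1) + 1 = k + 1 by ring,
    Real.Gamma_nat_eq_factorial]

theorem fsum_add_nat {ν : ℝ} (hν : ∀ n : ℕ, ν ≠ -n) (a : ℝ) (g : ℝ → ℝ) (n : ℕ) :
    fsum ν a g (a + ν + n) = coeff n ((mk fun k => g (a + k)) * negBinomialSeries ν) := by
  have hΓ : Real.Gamma ν ≠ 0 := Real.Gamma_ne_zero hν
  rw [fsum, show a + ν + n - ν - a = n by ring, Int.floor_natCast, Int.toNat_natCast, coeff_mul,
    Finset.Nat.sum_antidiagonal_eq_sum_range_succ fun i j => coeff i _ * coeff j _, mul_sum]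
  refine sum_congr rfl fun j hj => ?_
  have hjn : j ≤ n := Nat.lt_succ_iff.mp (mem_range.mp hj)
  rw [show a + ν + n - (a + j) - 1 = ν + (n - j : ℕ) - 1 by push_cast [Nat.cast_sub hjn]; ring,
    gff_add_nat_sub_one, Real.Gamma_add_nat_eq_mul_multichoose hν, coeff_mk,
    coeff_negBinomialSeries]
  field_simp

theorem fsum_fsum {μ ν : ℝ} (hμ : 0 < μ) (hν : 0 < ν) (a : ℝ) (g : ℝ → ℝ) (n : ℕ) :
    fsum μ (a + ν) (fsum ν a g) (a + (μ + ν) + n) = fsum (μ + ν) a g (a + (μ + ν) + n) := by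
  have not_pole {x : ℝ} (hx : 0 < x) (k : ℕ) : x ≠ -k := by
    intro h; linarith [(k.cast_nonneg : (0 : ℝ) ≤ k)]
  have hconv : (mk fun k => fsum ν a g (a + ν + k)) =
      (mk fun k => g (a + k)) * negBinomialSeries ν := by
    ext k
    rw [coeff_mk, fsum_add_nat (not_pole hν)]
  rw [show a + (μ + ν) + n = a + ν + μ + n by ring, fsum_add_nat (not_pole hμ), hconv, mul_assoc,
    ← negBinomialSeries_add, add_comm ν μ, show a + ν + μ + n = a + (μ + ν) + n by ring,
    fsum_add_nat (not_pole (add_pos hμ hν))]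

theorem stmt17 (μ ν : ℝ) (hμ : 0 < μ) (hni : ∀ n : ℤ, μ ≠ n) (m : ℕ)
    (hm : m = ⌈μ⌉₊) (hν : ν = m - μ) (f : ℝ → ℝ) (a n : ℕ) (t : ℝ)
    (ht : t = a + m + n) :
    fsum μ (a + ν) (caputo μ a f) t = fsum (m : ℝ) a (fdiff^[m] f) t := by
  have hμm : μ < m := (hm ▸ Nat.le_ceil μ).lt_of_ne (by exact_mod_cast hni m)
  have hm_eq : (m : ℝ) = μ + ν := by rw [hν]; ring
  have hcaputo : caputo μ a f = fsum ν a (fdiff^[m] f) := by rw [caputo, ← hm, ← hν]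
  rw [hcaputo, ht, hm_eq]
  exact fsum_fsum hμ (by linarith) _ _ n
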